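/- Conversely, if f : ℝ → ℝ and L : ℝ are such that for every nonzero infinitesimal hyperreal dx the quotient (f*(x₀ + dx) - f*(x₀))/dx is infinitely close to L, then f is differentiable at x₀ with derivative L. -/

import Mathlib

open Hyperreal

/-- The natural hyperreal extension of a real function. -/
noncomputable def hyperExt (f : ℝ → ℝ) (x : ℝ*) : ℝ* := x.map f

/-!
By the sequential criterion, a failure of `slope f x₀ → L` at `x₀` is witnessed by a sequence
`uₙ → x₀`, `uₙ ≠ x₀`, whose slopes stay outside a fixed neighbourhood of `L`. The hyperreal
`dx = [uₙ - x₀]` is then a nonzero infinitesimal, and the germ of these slopes along the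
ultrafilter is exactly the difference quotient `(f*(x₀ + dx) - f*(x₀)) / dx`, which therefore
cannot be infinitely close to `L`.
-/

set_option linter.deprecated false

open Filter Topology

namespace Hyperreal

theorem hyperExt_ofSeq (f : ℝ → ℝ) (u : ℕ → ℝ) : hyperExt f (ofSeq u) = ofSeq (f ∘ u) := rfl

theorem coe_add_ofSeq (a : ℝ) (u : ℕ → ℝ) : (a : ℝ*) + ofSeq u = ofSeq (fun n => a + u n) := rfl

theorem ofSeq_ne_zero {u : ℕ → ℝ} (hu : ∀ᶠ n in hyperfilter ℕ, u n ≠ 0) : ofSeq u ≠ 0 :=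
  fun h => (hu.and (Germ.coe_eq.mp h)).exists.elim fun _ hn => hn.1 hn.2

theorem infinitesimal_ofSeq_sub_iff {u : ℕ → ℝ} {r : ℝ} :
    Infinitesimal (ofSeq u - r) ↔ Tendsto u (hyperfilter ℕ) (𝓝 r) :=
  isSt_ofSeq_iff_tendsto.trans tendsto_sub_nhds_zero_iff

theorem hyperExt_slope_add (f : ℝ → ℝ) (a : ℝ) (dx : ℝ*) :
    hyperExt (slope f a) (a + dx) = (hyperExt f (a + dx) - hyperExt f a) / dx := by
  obtain ⟨v, rfl⟩ := ofSeq_surjective dx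
  simp only [coe_add_ofSeq, hyperExt_ofSeq]
  show ofSeq _ = ofSeq _
  congr 1
  funext n
  simp [slope_def_field]

theorem tendsto_nhdsNE_of_infinitesimal {g : ℝ → ℝ} {a l : ℝ}
    (h : ∀ dx : ℝ*, dx ≠ 0 → Infinitesimal dx → Infinitesimal (hyperExt g (a + dx) - l)) :
    Tendsto g (𝓝[≠] a) (𝓝 l) := by
  by_contra hg
  obtain ⟨s, hs, hgs⟩ := not_tendsto_iff_exists_frequently_notMem.mp hg
  obtain ⟨u, hu, hus⟩ := exists_seq_forall_of_frequently hgs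
  obtain ⟨hua, hu_ne⟩ := tendsto_nhdsWithin_iff.mp hu
  have hdx : Infinitesimal (ofSeq fun n => u n - a) :=
    infinitesimal_of_tendsto_zero (tendsto_sub_nhds_zero_iff.mpr hua)
  have hdx_ne : (ofSeq fun n => u n - a) ≠ 0 :=
    ofSeq_ne_zero <| (hu_ne.filter_mono Nat.hyperfilter_le_atTop).mono fun n hn =>
      sub_ne_zero.mpr hn
  have hgu := h _ hdx_ne hdx
  rw [coe_add_ofSeq] at hgu
  simp only [add_sub_cancel, hyperExt_ofSeq] at hgu
  obtain ⟨n, hn⟩ := (infinitesimal_ofSeq_sub_iff.mp hgu).eventually hs |>.exists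
  exact hus n hn

end Hyperreal

/-- infinitesimal slope condition implies derivative. -/
theorem slope_infinitely_close_hasDerivAt (f : ℝ → ℝ) (x₀ L : ℝ)
    (h : ∀ dx : ℝ*, dx ≠ 0 → Infinitesimal dx →
      Infinitesimal ((hyperExt f ((x₀ : ℝ*) + dx) - hyperExt f (x₀ : ℝ*)) / dx - (L : ℝ*))) :
    HasDerivAt f L x₀ := by
  rw [hasDerivAt_iff_tendsto_slope]
  refine tendsto_nhdsNE_of_infinitesimal fun dx hdx_ne hdx => ?_
  rw [hyperExt_slope_add]
  exact h dx hdx_ne hdx
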